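/- arXiv:2209.08571 — 5 statements merged into one kernel-verified Lean document; each statement's English description precedes it below -/
import Mathlib

section
/- Let A be an associative unital algebra over a commutative ring k, let Ω be a semigroup, and let λ ∈ k. The pair (A, (R_ω, R_ω + λ·id)_{ω∈Ω}) is a Rota-Baxter system family algebra if and only if (A, (R_ω)_{ω∈Ω}) is a Rota-Baxter family algebra of weight λ. -/
/-- The pair `(A, (R_ω, R_ω + λ·id)_{ω∈Ω})` is a Rota-Baxter system family algebra
iff `(A, (R_ω)_{ω∈Ω})` is a Rota-Baxter family algebra of weight `λ`. -/
theorem stmt_0 {k A Ω : Type*} [CommRing k] [Ring A] [Algebra k A] [Semigroup Ω]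
    (l : k) (R : Ω → (A →ₗ[k] A)) :
    (∀ (α β : Ω) (a b : A),
        R α a * R β b = R (α * β) (R α a * b + a * (R β b + l • b)) ∧
        (R α a + l • a) * (R β b + l • b)
          = R (α * β) (R α a * b + a * (R β b + l • b))
            + l • (R α a * b + a * (R β b + l • b)))
    ↔ (∀ (α β : Ω) (a b : A),
        R α a * R β b = R (α * β) (R α a * b + a * R β b + l • (a * b))) := by
  have key : ∀ (α β : Ω) (a b : A),
      R α a * b + a * (R β b + l • b) = R α a * b + a * R β b + l • (a * b) := by
    intro α β a b
    rw [mul_add, mul_smul_comm, add_assoc]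
  constructor
  · intro h α β a b
    rw [← key, (h α β a b).1]
  · intro h α β a b
    refine ⟨by rw [key, h], ?_⟩
    rw [key, ← h α β a b]
    simp only [mul_add, add_mul, smul_mul_assoc, mul_smul_comm, smul_add, smul_smul]
    abel
end

section
/- Let A be an associative unital algebra over a commutative ring k, Ω a set, and (λ_ω)_{ω∈Ω} a family of elements of k. The pair (A, (R_ω, R_ω + λ_ω·id)_{ω∈Ω}) is a matching Rota-Baxter system if and only if (A, (R_ω)_{ω∈Ω}) is a matching Rota-Baxter algebra of weight (λ_ω)_{ω∈Ω}. -/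
/-- `(A, (R_ω, R_ω + λ_ω·id)_{ω∈Ω})` is a matching Rota-Baxter system
iff `(A, (R_ω)_{ω∈Ω})` is a matching Rota-Baxter algebra of weight `(λ_ω)`. -/
theorem stmt_2 {k A Ω : Type*} [CommRing k] [Ring A] [Algebra k A]
    (l : Ω → k) (R : Ω → (A →ₗ[k] A)) :
    (∀ (α β : Ω) (a b : A),
        R α a * R β b = R β (R α a * b) + R α (a * (R β b + l β • b)) ∧
        (R α a + l α • a) * (R β b + l β • b)
          = (R β (R α a * b) + l β • (R α a * b))
            + (R α (a * (R β b + l β • b)) + l α • (a * (R β b + l β • b))))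
    ↔ (∀ (α β : Ω) (a b : A),
        R α a * R β b = R β (R α a * b) + R α (a * R β b) + l β • R α (a * b)) := by
  constructor
  · intro h α β a b
    have h1 := (h α β a b).1
    rw [h1, mul_add, mul_smul_comm, map_add, map_smul]
    abel
  · intro h α β a b
    have h1 := h α β a b
    constructor
    · rw [mul_add, mul_smul_comm, map_add, map_smul, h1]
      abel
    · simp only [mul_add, add_mul, map_add, map_smul, mul_smul_comm, smul_mul_assoc,
        smul_add, smul_smul, h1, mul_comm (l α) (l β)]
      abel
end

section
/- Let (A, (R_ω, S_ω)_{ω∈Ω}) be an Ω-Rota-Baxter system, (λ_ω)_{ω∈Ω} elements of k, and suppose S_ω = R_ω + λ_ω·id for all ω ∈ Ω, with α→β = α◁β = β and α←β = α▷β = α. Then (A, (R_ω)_{ω∈Ω}) is a matching Rota-Baxter algebra of weight (λ_ω): R_α(a)R_β(b) = R_α(aR_β(b)) + R_β(R_α(a)b) + λ_β R_α(ab) for all a,b ∈ A and α,β ∈ Ω. -/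
/-- `(A, (R_ω, S_ω)_{ω∈Ω})` is an Ω-Rota-Baxter system, for `Ω` equipped with
operations `L` (←), `Ra` (→), `dl` (◁), `dr` (▷). -/
def IsOmegaRBS {k A Ω : Type*} [CommRing k] [Ring A] [Algebra k A]
    (L Ra dl dr : Ω → Ω → Ω) (R S : Ω → (A →ₗ[k] A)) : Prop :=
  ∀ (α β : Ω) (a b : A),
    R α a * R β b = R (Ra α β) (R (dr α β) a * b) + R (L α β) (a * S (dl α β) b) ∧
    S α a * S β b = S (Ra α β) (R (dr α β) a * b) + S (L α β) (a * S (dl α β) b)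

/-- An Ω-Rota-Baxter system with `S_ω = R_ω + λ_ω·id`, `α→β = α◁β = β`,
`α←β = α▷β = α` gives a matching Rota-Baxter algebra of weight `(λ_ω)`. -/
theorem stmt_12 {k A Ω : Type*} [CommRing k] [Ring A] [Algebra k A]
    (l : Ω → k) (R S : Ω → (A →ₗ[k] A))
    (h : IsOmegaRBS (fun α _ : Ω => α) (fun _ β => β) (fun _ β => β)
      (fun α _ => α) R S)
    (hS : ∀ ω : Ω, S ω = R ω + l ω • LinearMap.id) :
    ∀ (α β : Ω) (a b : A),
      R α a * R β b = R α (a * R β b) + R β (R α a * b) + l β • R α (a * b) := by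
  intro α β a b
  have h1 := (h α β a b).1
  simp only [hS β] at h1
  simp only [LinearMap.add_apply, LinearMap.smul_apply, LinearMap.id_coe, id_eq,
    mul_add, mul_smul_comm, map_add, map_smul] at h1
  rw [h1]; abel
end

section
/- Let Ω be a set with binary operations satisfying α←β = α→β =: α·β for an associative operation ·, and α◁β = β, α▷β = α, and let λ ∈ k. If (A, (R_ω)_{ω∈Ω}) is a Rota-Baxter family algebra of weight λ with respect to (Ω, ·), then setting S_ω := R_ω + λ·id makes (A, (R_ω, S_ω)_{ω∈Ω}) an Ω-Rota-Baxter system. -/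
/-- A Rota-Baxter family algebra of weight `λ` with `S_ω := R_ω + λ·id` is an
Ω-Rota-Baxter system for the operations `α←β = α→β = α·β`, `α◁β = β`, `α▷β = α`. -/
theorem stmt_15 {k A Ω : Type*} [CommRing k] [Ring A] [Algebra k A] [Semigroup Ω]
    (l : k) (R : Ω → (A →ₗ[k] A))
    (h : ∀ (α β : Ω) (a b : A),
      R α a * R β b = R (α * β) (R α a * b + a * R β b + l • (a * b))) :
    IsOmegaRBS (fun α β : Ω => α * β) (fun α β => α * β) (fun _ β => β)
      (fun α _ => α) R (fun ω => R ω + l • LinearMap.id) := by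
  intro α β a b
  constructor
  · simp only [LinearMap.add_apply, LinearMap.smul_apply, LinearMap.id_apply, h α β a b,
      mul_add, smul_mul_assoc, mul_smul_comm, map_add, map_smul]
    abel
  · simp only [LinearMap.add_apply, LinearMap.smul_apply, LinearMap.id_apply,
      mul_add, add_mul, smul_mul_assoc, mul_smul_comm]
    rw [h α β a b]
    simp only [map_add, map_smul]
    module
end

section
/- Let (A, R, S) be a Rota-Baxter system. Then the operation a ∘ b := R(a)b + aS(b) is associative on A. -/
/-- In a Rota-Baxter system `(A, R, S)`, the operation `a ∘ b := R(a)b + aS(b)`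
is associative. -/
theorem stmt_19 {k A : Type*} [CommRing k] [Ring A] [Algebra k A]
    (R S : A →ₗ[k] A)
    (h : ∀ a b : A, R a * R b = R (R a * b + a * S b) ∧ S a * S b = S (R a * b + a * S b)) :
    ∀ a b c : A,
      R (R a * b + a * S b) * c + (R a * b + a * S b) * S c
        = R a * (R b * c + b * S c) + a * S (R b * c + b * S c) := by
  intro a b c
  rw [← (h a b).1, ← (h b c).2]
  noncomm_ring
end
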